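/- arXiv:2601.00153 — 2 statements merged into one kernel-verified Lean document; each statement's English description precedes it below -/
import Mathlib

section
/- Let m ≥ 1 and let r_1, …, r_m be positive integers. Then (∑_{i=1}^m r_i)² ≥ ∑_{i=1}^m (2m+1−2i)·r_i, with equality if and only if r_i = 1 for all i. -/
/-! The difference of the two sides is `∑ₖ (rₖ - 1) (2 (r₁ + ⋯ + rₖ₋₁) + rₖ)`, a sum of
nonnegative terms, each of which vanishes exactly when `rₖ = 1`. -/

open Finset

theorem sq_sum_sub_sum_odd_mul_eq {m : ℕ} (r : Fin m → ℤ) :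
    (∑ i, r i) ^ 2 - ∑ i : Fin m, (2 * (m : ℤ) + 1 - 2 * ((i : ℤ) + 1)) * r i =
      ∑ k, (r k - 1) * (2 * ∑ j ∈ Iio k, r j + r k) := by
  induction m with
  | zero => simp
  | succ m ih =>
    have hweights : ∑ i : Fin m, (2 * ((m + 1 : ℕ) : ℤ) + 1 - 2 * ((i : ℤ) + 1)) * r i.castSucc =
        ∑ i : Fin m, (2 * (m : ℤ) + 1 - 2 * ((i : ℤ) + 1)) * r i.castSucc +
          2 * ∑ i : Fin m, r i.castSucc := by
      rw [mul_sum, ← sum_add_distrib]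
      exact sum_congr rfl fun i _ => by push_cast; ring
    have hprefix (k : Fin m) : ∑ j ∈ Iio k.castSucc, r j = ∑ j ∈ Iio k, r j.castSucc := by
      rw [← Fin.map_castSuccEmb_Iio, sum_map]; rfl
    simp only [Fin.sum_univ_castSucc, Fin.val_castSucc, Fin.val_last, hweights, hprefix,
      Fin.Iio_last_eq_map, sum_map, Fin.coe_castSuccEmb, ← ih]
    push_cast
    ring

theorem stmt0_general (m : ℕ) (r : Fin m → ℤ) (hr : ∀ i, 1 ≤ r i) :
    (∑ i, r i) ^ 2 ≥ ∑ i : Fin m, (2 * (m : ℤ) + 1 - 2 * ((i : ℤ) + 1)) * r i ∧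
    ((∑ i, r i) ^ 2 = ∑ i : Fin m, (2 * (m : ℤ) + 1 - 2 * ((i : ℤ) + 1)) * r i ↔
      ∀ i, r i = 1) := by
  have hprefix_nonneg (k : Fin m) : 0 ≤ ∑ j ∈ Iio k, r j :=
    sum_nonneg fun j _ => zero_le_one.trans (hr j)
  have hfactor_pos (k : Fin m) : 0 < 2 * ∑ j ∈ Iio k, r j + r k := by
    linarith [hprefix_nonneg k, hr k]
  have hterm_nonneg (k : Fin m) : 0 ≤ (r k - 1) * (2 * ∑ j ∈ Iio k, r j + r k) :=
    mul_nonneg (sub_nonneg.2 (hr k)) (hfactor_pos k).le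
  constructor
  · rw [ge_iff_le, ← sub_nonneg, sq_sum_sub_sum_odd_mul_eq]
    exact sum_nonneg fun k _ => hterm_nonneg k
  · rw [← sub_eq_zero, sq_sum_sub_sum_odd_mul_eq,
      sum_eq_zero_iff_of_nonneg fun k _ => hterm_nonneg k]
    simp only [mem_univ, true_implies, mul_eq_zero, sub_eq_zero]
    exact forall_congr' fun k => or_iff_left (hfactor_pos k).ne'

/-- Let `m ≥ 1` and let `r 1, …, r m` be positive integers. Then
`(∑ rᵢ)² ≥ ∑ (2m+1−2i)·rᵢ`, with equality iff `rᵢ = 1` for all `i`. -/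
theorem stmt0 (m : ℕ) (hm : 1 ≤ m) (r : Fin m → ℤ) (hr : ∀ i, 1 ≤ r i) :
    (∑ i, r i) ^ 2 ≥ ∑ i : Fin m, (2 * (m : ℤ) + 1 - 2 * ((i : ℤ) + 1)) * r i ∧
    ((∑ i, r i) ^ 2 = ∑ i : Fin m, (2 * (m : ℤ) + 1 - 2 * ((i : ℤ) + 1)) * r i ↔
      ∀ i, r i = 1) :=
  stmt0_general m r hr
end

section
/- Let k be a field and d ≥ 1. The smooth locus of the projective quadric V(xz + y²) ⊂ ℙ^{d+3} (with homogeneous coordinates x, y, z, u₀, …, u_d) is the complement of the linear subspace {x = y = z = 0} ≅ ℙ^d, and on the two affine charts {x ≠ 0} and {z ≠ 0} the induced coordinates (y, u₀,…,u_d) and (−y, u₀,…,u_d) are related over the overlap by (y, u₀,…,u_d) ↦ (1/y, −u₀/y², …, −u_d/y²). -/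
/-! The singular points of `V(xz + y²)` are where the gradient `(z, 2y, x)` vanishes, and on the
quadric `x = z = 0` already forces `y² = 0`. On the overlap of the charts `x ≠ 0` and `z ≠ 0` the
equation gives `y² = -xz ≠ 0`, and both transition formulas are the identity `xz = -y²` after
clearing denominators. -/

section QuadricCone

variable {R : Type*} [CommRing R] [IsReduced R] {x y z : R}

theorem gradient_eq_zero_iff_of_mul_add_sq_eq_zero (hq : x * z + y ^ 2 = 0) :
    (z = 0 ∧ 2 * y = 0 ∧ x = 0) ↔ (x = 0 ∧ y = 0 ∧ z = 0) := by
  constructor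
  · rintro ⟨rfl, -, rfl⟩
    exact ⟨rfl, pow_eq_zero_iff two_ne_zero |>.mp (by simpa using hq), rfl⟩
  · rintro ⟨rfl, rfl, rfl⟩
    simp

end QuadricCone

section ChartTransition

variable {K : Type*} [Field K] {x y z : K}

theorem ne_zero_of_mul_add_sq_eq_zero (hq : x * z + y ^ 2 = 0) (hx : x ≠ 0) (hz : z ≠ 0) :
    y ≠ 0 := by
  rintro rfl
  simp_all

theorem neg_div_eq_inv_div_of_mul_add_sq_eq_zero (hq : x * z + y ^ 2 = 0) (hx : x ≠ 0)
    (hz : z ≠ 0) : -y / z = (y / x)⁻¹ := by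
  have hy := ne_zero_of_mul_add_sq_eq_zero hq hx hz
  field_simp
  linear_combination -hq

theorem div_eq_neg_div_div_sq_of_mul_add_sq_eq_zero (hq : x * z + y ^ 2 = 0) (hx : x ≠ 0)
    (hz : z ≠ 0) (u : K) : u / z = -(u / x) / (y / x) ^ 2 := by
  have hy := ne_zero_of_mul_add_sq_eq_zero hq hx hz
  field_simp
  linear_combination u * hq

end ChartTransition

/-- For the quadric `V(xz + y²) ⊂ ℙ^{d+3}` with homogeneous coordinates
`x = w 0`, `y = w 1`, `z = w 2`, `uᵢ = w (3+i)`: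
(1) a point of the quadric is singular (all partial derivatives `z, 2y, x` of `xz+y²`
vanish) iff it lies in the linear subspace `{x = y = z = 0} ≅ ℙ^d`; and
(2) over the overlap of the charts `{x ≠ 0}` and `{z ≠ 0}`, the chart coordinates
`(y, u₀,…,u_d)` (normalizing `x = 1`) and `(−y, u₀,…,u_d)` (normalizing `z = 1`) are
related by `(y, u₀,…,u_d) ↦ (1/y, −u₀/y², …, −u_d/y²)`. -/
theorem stmt18 (k : Type*) [Field k] (d : ℕ)
    (w : Fin (d + 4) → k)
    (hq : w 0 * w 2 + w 1 ^ 2 = 0) :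
    ((w 2 = 0 ∧ 2 * w 1 = 0 ∧ w 0 = 0) ↔ (w 0 = 0 ∧ w 1 = 0 ∧ w 2 = 0)) ∧
    (w 0 ≠ 0 → w 2 ≠ 0 →
      -w 1 / w 2 = (w 1 / w 0)⁻¹ ∧
      ∀ i : Fin (d + 1), w ⟨3 + (i : ℕ), by omega⟩ / w 2 =
        -(w ⟨3 + (i : ℕ), by omega⟩ / w 0) / (w 1 / w 0) ^ 2) :=
  ⟨gradient_eq_zero_iff_of_mul_add_sq_eq_zero hq, fun h0 h2 =>
    ⟨neg_div_eq_inv_div_of_mul_add_sq_eq_zero hq h0 h2,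
      fun _ => div_eq_neg_div_div_sq_of_mul_add_sq_eq_zero hq h0 h2 _⟩⟩
end
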